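/- (Lemma 3.3.) Let P > 2 and define f₂ : ℝ → ℝ by f₂(B) = 1/2 − (1/2)·erf(√B − √P). Set ζ₁ = ((√P − √(P−2))/2)² and ζ₂ = ((√P + √(P−2))/2)². Then there exist real numbers τ₁ and τ₂ with 0 < τ₁ ≤ ζ₁ and τ₂ ≥ ζ₂ such that the whole graph of f₂ over [0, ∞) lies above the straight line through the points (τ₁, f₂(τ₁)) and (τ₂, f₂(τ₂)); that is, for every B ≥ 0, f₂(B) ≥ ((f₂(τ₂) − f₂(τ₁))/(τ₂ − τ₁))·(B − τ₁) + f₂(τ₁). -/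

import Mathlib

open MeasureTheory ProbabilityTheory Real Set

noncomputable def erf (x : ℝ) : ℝ :=
  (2 / Real.sqrt Real.pi) * ∫ t in (0:ℝ)..x, Real.exp (-t^2)

/-!
Write `a = √P` and `ζᵢ = sᵢ²`. Then `f₂` is decreasing and `f₂''` has the sign of
`2B - 2a√B + 1 = 2(√B - s₁)(√B - s₂)`, so `f₂` is convex on `[0, ζ₁]`, concave on `[ζ₁, ζ₂]` and
convex on `[ζ₂, ∞)`; the required line is a common tangent. Tangents at points `c ≥ ζ₂` lie below
`f₂` on `[ζ₂, ∞)`. The tangent at `ζ₂` passes above `f₂(ζ₁)`, whereas for huge `c` the tangent is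
almost flat and close to `0 < f₂` on `[0, ζ₂]`. By the intermediate value theorem for
`c ↦ min_{[0, ζ₂]} (f₂ - tangent at c)` some tangent at `c > ζ₂` supports `f₂` and touches it in
`[0, ζ₂]`; concavity moves the contact point into `[0, ζ₁]`, and it is not `0` because
`f₂(0) - f₂(B)` grows like `√B`.
-/

open Filter Topology

lemma continuous_exp_neg_sq : Continuous fun t : ℝ => exp (-t ^ 2) := by fun_prop

lemma hasDerivAt_erf (x : ℝ) : HasDerivAt erf (2 / √π * exp (-x ^ 2)) x :=
  ((intervalIntegral.integral_hasStrictDerivAt_right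
    (continuous_exp_neg_sq.intervalIntegrable 0 x)
    (continuous_exp_neg_sq.stronglyMeasurableAtFilter _ _)
    continuous_exp_neg_sq.continuousAt).hasDerivAt).const_mul _

lemma continuous_erf : Continuous erf :=
  continuous_iff_continuousAt.2 fun x => (hasDerivAt_erf x).continuousAt

lemma strictMono_erf : StrictMono erf :=
  strictMono_of_deriv_pos fun x => by rw [(hasDerivAt_erf x).deriv]; positivity

@[simp] lemma erf_zero : erf 0 = 0 := by simp [erf]

lemma le_erf_sub_erf {z y M : ℝ} (hzy : z ≤ y) (hM : ∀ t ∈ Icc z y, t ^ 2 ≤ M) :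
    2 / √π * exp (-M) * (y - z) ≤ erf y - erf z := by
  have hint : erf y - erf z = 2 / √π * ∫ t in z..y, exp (-t ^ 2) := by
    rw [erf, erf, ← mul_sub, intervalIntegral.integral_interval_sub_left
      (continuous_exp_neg_sq.intervalIntegrable _ _) (continuous_exp_neg_sq.intervalIntegrable _ _)]
  have hbound : ∫ _ in z..y, exp (-M) ≤ ∫ t in z..y, exp (-t ^ 2) :=
    intervalIntegral.integral_mono_on hzy intervalIntegrable_const
      (continuous_exp_neg_sq.intervalIntegrable _ _)
      fun t ht => exp_le_exp.2 (neg_le_neg (hM t ht))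
  rw [hint, mul_assoc]
  rw [intervalIntegral.integral_const, smul_eq_mul] at hbound
  gcongr
  linarith

lemma add_mul_exp_neg_sq_le {a u : ℝ} (ha : 0 ≤ a) (hau : a ≤ u) :
    (a + u) * exp (-u ^ 2) ≤ 2 / u := by
  obtain rfl | hu := (ha.trans hau).eq_or_lt
  · simp [le_antisymm hau ha]
  have hsq : u ^ 2 ≤ exp (u ^ 2) := by linarith [add_one_le_exp (u ^ 2)]
  calc (a + u) * exp (-u ^ 2) ≤ 2 * u / exp (u ^ 2) := by
        rw [exp_neg, ← div_eq_mul_inv]; gcongr; linarith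
    _ ≤ 2 * u / u ^ 2 := by gcongr
    _ = 2 / u := by field_simp

lemma exists_tangent_le_on_Icc_touching {f f' : ℝ → ℝ} {l q c₁ : ℝ}
    (hf : Continuous f) (hf' : ContinuousOn f' (Ici q))
    (hq : ∃ B ∈ Icc l q, f B < f q + f' q * (B - q)) (hqc₁ : q ≤ c₁)
    (hc₁ : ∀ B ∈ Icc l q, f c₁ + f' c₁ * (B - c₁) ≤ f B) :
    ∃ c, q < c ∧ (∀ B ∈ Icc l q, f c + f' c * (B - c) ≤ f B) ∧
      ∃ b ∈ Icc l q, f b = f c + f' c * (b - c) := by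
  obtain ⟨B₀, hB₀, hfB₀⟩ := hq
  set g : ℝ → ℝ := fun c => f' (max c q)
  have hg : Continuous g := hf'.comp_continuous (by fun_prop) fun c => le_max_right c q
  have hgq : ∀ c, q ≤ c → g c = f' c := fun c hc => by simp [g, max_eq_left hc]
  set gap : ℝ → ℝ → ℝ := fun c B => f B - (f c + g c * (B - c))
  have hgap : Continuous ↿gap := by fun_prop
  set D : ℝ → ℝ := fun c => sInf (gap c '' Icc l q)
  have hK : IsCompact (Icc l q) := isCompact_Icc
  have hne : (Icc l q).Nonempty := ⟨B₀, hB₀⟩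
  have hbdd : ∀ c, BddBelow (gap c '' Icc l q) := fun c =>
    (hK.image (hgap.comp (Continuous.prodMk_right c))).bddBelow
  have hDq : D q < 0 := (csInf_le (hbdd q) ⟨B₀, hB₀, rfl⟩).trans_lt (by
    simp only [gap, hgq q le_rfl]; linarith)
  have hDc₁ : 0 ≤ D c₁ := le_csInf (hne.image _) (by
    rintro _ ⟨B, hB, rfl⟩; simp only [gap, hgq c₁ hqc₁]; linarith [hc₁ B hB])
  obtain ⟨c, hc, hDc⟩ := intermediate_value_Icc hqc₁ (hK.continuous_sInf hgap).continuousOn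
    ⟨hDq.le, hDc₁⟩
  have hqc : q < c := hc.1.lt_of_ne (by rintro rfl; exact hDq.ne hDc)
  obtain ⟨b, hb, hbmin⟩ := (hK.image (hgap.comp (Continuous.prodMk_right c))).sInf_mem
    (hne.image _)
  refine ⟨c, hqc, fun B hB => ?_, b, hb, ?_⟩
  · have := csInf_le (hbdd c) ⟨B, hB, rfl⟩
    simp only [gap, hgq c hc.1] at this hDc
    linarith
  · have : gap c b = 0 := hbmin.trans hDc
    simp only [gap, hgq c hc.1] at this
    linarith

lemma StrictConvexOn.add_mul_sub_lt_of_hasDerivAt {S : Set ℝ} {f : ℝ → ℝ} {x y f' : ℝ}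
    (hf : StrictConvexOn ℝ S f) (hx : x ∈ S) (hy : y ∈ S) (hxy : y ≠ x)
    (hf' : HasDerivAt f f' x) : f x + f' * (y - x) < f y := by
  rcases hxy.lt_or_gt with h | h
  · have := hf.slope_lt_of_hasDerivAt hy hx h hf'
    rw [slope_def_field, div_lt_iff₀ (sub_pos.2 h)] at this
    linarith
  · have := hf.lt_slope_of_hasDerivAt hx hy h hf'
    rw [slope_def_field, lt_div_iff₀ (sub_pos.2 h)] at this
    linarith

lemma exists_tangent_le_touching {f f' : ℝ → ℝ} {l p q c₁ : ℝ} (hlp : l ≤ p) (hpq : p < q)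
    (hf : Continuous f) (hf'c : ContinuousOn f' (Ici q))
    (hf' : ∀ c, q ≤ c → HasDerivAt f (f' c) c)
    (hconc : StrictConcaveOn ℝ (Icc p q) f) (hconv : StrictConvexOn ℝ (Ici q) f)
    (hqc₁ : q ≤ c₁) (hc₁ : ∀ B ∈ Icc l q, f c₁ + f' c₁ * (B - c₁) ≤ f B) :
    ∃ c, q < c ∧ (∀ B, l ≤ B → f c + f' c * (B - c) ≤ f B) ∧
      ∃ b ∈ Icc l p, f b = f c + f' c * (b - c) := by
  have hq : f p < f q + f' q * (p - q) := by
    have := hconc.lt_slope_of_hasDerivAt (left_mem_Icc.2 hpq.le) (right_mem_Icc.2 hpq.le) hpq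
      (hf' q le_rfl)
    rw [slope_def_field, lt_div_iff₀ (sub_pos.2 hpq)] at this
    linarith
  obtain ⟨c, hqc, hleft, b, hb, hfb⟩ :=
    exists_tangent_le_on_Icc_touching hf hf'c ⟨p, ⟨hlp, hpq.le⟩, hq⟩ hqc₁ hc₁
  set T : ℝ → ℝ := fun B => f c + f' c * (B - c)
  have hsupp : ∀ B, l ≤ B → T B ≤ f B := by
    intro B hlB
    rcases le_total B q with hBq | hqB
    · exact hleft B ⟨hlB, hBq⟩
    obtain rfl | hBc := eq_or_ne B c
    · simp [T]
    exact (hconv.add_mul_sub_lt_of_hasDerivAt (mem_Ici.2 hqc.le) hqB hBc (hf' c hqc.le)).le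
  refine ⟨c, hqc, hsupp, ?_⟩
  by_cases hbp : b ≤ p
  · exact ⟨b, ⟨hb.1, hbp⟩, hfb⟩
  have hTq : T q < f q :=
    hconv.add_mul_sub_lt_of_hasDerivAt hqc.le self_mem_Ici hqc.ne (hf' c hqc.le)
  have hT : ConvexOn ℝ (Icc p q) T :=
    (((LinearMap.mulLeft ℝ (f' c)).convexOn (convex_Icc p q)).add_const
      (f c - f' c * c)).congr fun B _ => by
        simp only [T, Pi.add_apply, LinearMap.mulLeft_apply]
        ring
  -- `f - T` is concave on `[p, q]`, vanishes at `b` and is positive at `q`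
  have hmin := (hconc.concaveOn.sub hT).min_le_of_mem_Icc
    (left_mem_Icc.2 hpq.le) (right_mem_Icc.2 hpq.le) ⟨(not_le.1 hbp).le, hb.2⟩
  refine ⟨p, ⟨hlp, le_rfl⟩, le_antisymm ?_ (hsupp p hlp)⟩
  simp only [Pi.sub_apply, hfb] at hmin
  rcases min_le_iff.1 hmin with h | h <;> linarith

theorem exists_supporting_chord {f f' : ℝ → ℝ} {l p q c₁ : ℝ} (hpq : p < q)
    (hf : Continuous f) (hf'c : ContinuousOn f' (Ici q))
    (hf' : ∀ c, q ≤ c → HasDerivAt f (f' c) c)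
    (hconc : StrictConcaveOn ℝ (Icc p q) f) (hconv : StrictConvexOn ℝ (Ici q) f)
    (hqc₁ : q ≤ c₁) (hc₁ : ∀ B ∈ Icc l q, f c₁ + f' c₁ * (B - c₁) ≤ f B)
    (hcusp : ∀ m, ∃ x ∈ Ioc l p, f x < f l + m * (x - l)) :
    ∃ b ∈ Ioc l p, ∃ c, q ≤ c ∧ ∀ B, l ≤ B → f b + slope f b c * (B - b) ≤ f B := by
  have hlp : l ≤ p := by
    obtain ⟨x, hx, -⟩ := hcusp 0
    exact hx.1.le.trans hx.2
  obtain ⟨c, hqc, hsupp, b, hb, hfb⟩ :=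
    exists_tangent_le_touching hlp hpq hf hf'c hf' hconc hconv hqc₁ hc₁
  have hlb : l < b := by
    refine hb.1.lt_of_ne ?_
    rintro rfl
    obtain ⟨x, hx, hfx⟩ := hcusp (f' c)
    linarith [hsupp x hx.1.le]
  have hslope : slope f b c = f' c := by
    rw [slope_def_field, hfb, div_eq_iff (sub_pos.2 (hb.2.trans_lt (hpq.trans hqc))).ne']
    ring
  refine ⟨b, ⟨hlb, hb.2⟩, c, hqc.le, fun B hB => ?_⟩
  rw [hslope, hfb]
  linarith [hsupp B hB]

noncomputable def halfErfcSqrt (a B : ℝ) : ℝ := 1 / 2 - 1 / 2 * erf (√B - a)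

noncomputable def halfErfcSqrtDeriv (a B : ℝ) : ℝ := -(exp (-(√B - a) ^ 2) / (2 * √π * √B))

section halfErfcSqrt

variable {a B : ℝ}

lemma continuous_halfErfcSqrt : Continuous (halfErfcSqrt a) :=
  continuous_const.sub (continuous_const.mul (continuous_erf.comp (by fun_prop)))

lemma antitone_halfErfcSqrt : Antitone (halfErfcSqrt a) := fun x y hxy => by
  unfold halfErfcSqrt
  gcongr
  exact strictMono_erf.monotone (by gcongr)

lemma hasDerivAt_halfErfcSqrt (hB : 0 < B) :
    HasDerivAt (halfErfcSqrt a) (halfErfcSqrtDeriv a B) B := by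
  have hsqrt := (hasDerivAt_sqrt hB.ne').sub_const a
  refine ((((hasDerivAt_erf _).comp B hsqrt).const_mul (1 / 2 : ℝ)).const_sub
    (1 / 2 : ℝ)).congr_deriv ?_
  have : √B ≠ 0 := (sqrt_pos.2 hB).ne'
  simp only [halfErfcSqrtDeriv]
  field_simp

lemma halfErfcSqrtDeriv_neg (hB : 0 < B) : halfErfcSqrtDeriv a B < 0 := by
  have := sqrt_pos.2 hB
  unfold halfErfcSqrtDeriv
  exact neg_neg_of_pos (by positivity)

lemma continuousOn_halfErfcSqrtDeriv : ContinuousOn (halfErfcSqrtDeriv a) (Ioi 0) := by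
  refine (ContinuousOn.div (by fun_prop) (by fun_prop) fun x hx => ?_).neg
  have := sqrt_pos.2 (mem_Ioi.1 hx)
  positivity

lemma hasDerivAt_halfErfcSqrtDeriv (hB : 0 < B) :
    HasDerivAt (halfErfcSqrtDeriv a)
      (exp (-(√B - a) ^ 2) * (2 * B - 2 * a * √B + 1) / (4 * √π * B * √B)) B := by
  have hs := hasDerivAt_sqrt hB.ne'
  have hnum := (((hs.sub_const a).pow 2).neg).exp
  have hden := hs.const_mul (2 * √π)
  have hsB := sqrt_pos.2 hB
  refine (hnum.div hden (by positivity)).neg.congr_deriv ?_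
  simp only [Pi.neg_apply, Pi.pow_apply]
  have hss := mul_self_sqrt hB.le
  set s := √B
  rw [← hss]
  field_simp
  ring

lemma deriv2_halfErfcSqrt (hB : 0 < B) :
    deriv^[2] (halfErfcSqrt a) B
      = exp (-(√B - a) ^ 2) * (2 * B - 2 * a * √B + 1) / (4 * √π * B * √B) := by
  have hderiv : deriv (halfErfcSqrt a) =ᶠ[𝓝 B] halfErfcSqrtDeriv a :=
    eventually_of_mem (Ioi_mem_nhds hB) fun x hx => (hasDerivAt_halfErfcSqrt hx).deriv
  rw [Function.iterate_succ_apply, Function.iterate_one, hderiv.deriv_eq,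
    (hasDerivAt_halfErfcSqrtDeriv hB).deriv]

lemma two_mul_sub_two_mul_mul_sqrt_add_one_eq {s₁ s₂ : ℝ} (hsum : s₁ + s₂ = a)
    (hprod : 2 * s₁ * s₂ = 1) (hB : 0 ≤ B) :
    2 * B - 2 * a * √B + 1 = 2 * (√B - s₁) * (√B - s₂) := by
  have := sq_sqrt hB
  rw [← hsum]
  linear_combination -2 * this - hprod

lemma strictConcaveOn_halfErfcSqrt {s₁ s₂ : ℝ} (hs₁ : 0 < s₁) (hsum : s₁ + s₂ = a)
    (hprod : 2 * s₁ * s₂ = 1) : StrictConcaveOn ℝ (Icc (s₁ ^ 2) (s₂ ^ 2)) (halfErfcSqrt a) := by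
  refine strictConcaveOn_of_deriv2_neg (convex_Icc _ _) continuous_halfErfcSqrt.continuousOn
    fun x hx => ?_
  rw [interior_Icc] at hx
  have hx0 : 0 < x := (sq_nonneg s₁).trans_lt hx.1
  have h₁ : s₁ < √x := lt_sqrt_of_sq_lt hx.1
  have h₂ : √x < s₂ := (sqrt_lt' (by nlinarith)).2 hx.2
  rw [deriv2_halfErfcSqrt hx0, two_mul_sub_two_mul_mul_sqrt_add_one_eq hsum hprod hx0.le]
  have := sqrt_pos.2 hx0
  refine div_neg_of_neg_of_pos (mul_neg_of_pos_of_neg (exp_pos _) ?_) (by positivity)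
  nlinarith

lemma strictConvexOn_halfErfcSqrt {s₁ s₂ : ℝ} (hs : s₁ ≤ s₂) (hsum : s₁ + s₂ = a)
    (hprod : 2 * s₁ * s₂ = 1) : StrictConvexOn ℝ (Ici (s₂ ^ 2)) (halfErfcSqrt a) := by
  refine strictConvexOn_of_deriv2_pos (convex_Ici _) continuous_halfErfcSqrt.continuousOn
    fun x hx => ?_
  rw [interior_Ici] at hx
  have hx0 : 0 < x := (sq_nonneg s₂).trans_lt hx
  have h₂ : s₂ < √x := lt_sqrt_of_sq_lt hx
  rw [deriv2_halfErfcSqrt hx0, two_mul_sub_two_mul_mul_sqrt_add_one_eq hsum hprod hx0.le]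
  have := sqrt_pos.2 hx0
  refine div_pos (mul_pos (exp_pos _) ?_) (by positivity)
  nlinarith

lemma exists_tangent_halfErfcSqrt_le {q : ℝ} (hq : 0 ≤ q) (hqa : √q < a) :
    ∃ c, q ≤ c ∧ ∀ B ∈ Icc 0 q,
      halfErfcSqrt a c + halfErfcSqrtDeriv a c * (B - c) ≤ halfErfcSqrt a B := by
  have ha : 0 ≤ a := (sqrt_nonneg q).trans hqa.le
  set ε := -erf (√q - a)
  have hε : 0 < ε := neg_pos.2 (erf_zero ▸ strictMono_erf (sub_neg.2 hqa))
  have hπε : 0 < √π * ε := by positivity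
  set u := a + 2 / (√π * ε)
  have hu : 0 < u := by positivity
  have htail : (a + u) * exp (-u ^ 2) ≤ √π * ε := by
    refine (add_mul_exp_neg_sq_le ha (le_add_of_nonneg_right (by positivity))).trans ?_
    rw [div_le_iff₀ hu]
    have : 2 / (√π * ε) * (√π * ε) = 2 := div_mul_cancel₀ _ hπε.ne'
    nlinarith
  have herf : 0 ≤ erf u := erf_zero ▸ strictMono_erf.monotone hu.le
  have hc : √((a + u) ^ 2) = a + u := sqrt_sq (by positivity)
  have hderiv : halfErfcSqrtDeriv a ((a + u) ^ 2) < 0 := halfErfcSqrtDeriv_neg (by positivity)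
  refine ⟨(a + u) ^ 2, ?_, fun B hB => ?_⟩
  · calc q = √q ^ 2 := (sq_sqrt hq).symm
      _ ≤ (a + u) ^ 2 := by gcongr; linarith
  calc halfErfcSqrt a ((a + u) ^ 2) + halfErfcSqrtDeriv a ((a + u) ^ 2) * (B - (a + u) ^ 2)
      ≤ halfErfcSqrt a ((a + u) ^ 2) - halfErfcSqrtDeriv a ((a + u) ^ 2) * (a + u) ^ 2 := by
        nlinarith [hB.1]
    _ = 1 / 2 - 1 / 2 * erf u + (a + u) * exp (-u ^ 2) / (2 * √π) := by
        have : √π ≠ 0 := by positivity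
        simp only [halfErfcSqrt, halfErfcSqrtDeriv, hc, add_sub_cancel_left]
        field_simp
        ring
    _ ≤ 1 / 2 + 1 / 2 * ε := by
        have : (a + u) * exp (-u ^ 2) / (2 * √π) ≤ ε / 2 := by
          rw [div_le_iff₀ (by positivity)]
          linarith
        linarith
    _ = halfErfcSqrt a q := by simp only [halfErfcSqrt, ε]; ring
    _ ≤ halfErfcSqrt a B := antitone_halfErfcSqrt hB.2

lemma halfErfcSqrt_le_halfErfcSqrt_zero_sub (hB : √B ≤ 2 * a) :
    halfErfcSqrt a B ≤ halfErfcSqrt a 0 - exp (-a ^ 2) / √π * √B := by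
  have h := le_erf_sub_erf (z := -a) (y := √B - a) (M := a ^ 2) (by linarith [sqrt_nonneg B])
    fun t ht => sq_le_sq' (by linarith [ht.1]) (by linarith [ht.2])
  have : 2 / √π * exp (-a ^ 2) * (√B - a - -a) = 2 * (exp (-a ^ 2) / √π * √B) := by ring
  simp only [halfErfcSqrt, sqrt_zero, zero_sub]
  linarith

lemma exists_halfErfcSqrt_lt_add_mul (ha : 0 < a) {p : ℝ} (hp : 0 < p) (m : ℝ) :
    ∃ x ∈ Ioc 0 p, halfErfcSqrt a x < halfErfcSqrt a 0 + m * (x - 0) := by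
  have hk : 0 < exp (-a ^ 2) / √π := by positivity
  have h₁ : ∀ᶠ x in 𝓝 (0 : ℝ), 0 < exp (-a ^ 2) / √π + m * √x :=
    continuousAt_const.eventually_lt (by fun_prop) (by simpa using hk)
  have h₂ : ∀ᶠ x in 𝓝 (0 : ℝ), √x < 2 * a :=
    continuous_sqrt.continuousAt.eventually_lt continuousAt_const (by simpa using ha)
  obtain ⟨x, ⟨hkm, hxa, hxp⟩, hx⟩ := (((h₁.and (h₂.and (eventually_lt_nhds hp))).filter_mono
    nhdsWithin_le_nhds).and (self_mem_nhdsWithin (s := Ioi 0))).exists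
  refine ⟨x, ⟨hx, hxp.le⟩, (halfErfcSqrt_le_halfErfcSqrt_zero_sub hxa.le).trans_lt ?_⟩
  have hpos := mul_pos (sqrt_pos.2 hx) hkm
  have : √x * (exp (-a ^ 2) / √π + m * √x) = exp (-a ^ 2) / √π * √x + m * (x - 0) := by
    linear_combination m * mul_self_sqrt hx.le
  linarith

end halfErfcSqrt

theorem stmt_7 (P : ℝ) (hP : 2 < P)
    (f₂ : ℝ → ℝ) (hf₂ : ∀ B, f₂ B = 1/2 - (1/2) * erf (Real.sqrt B - Real.sqrt P))
    (ζ₁ ζ₂ : ℝ)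
    (hζ₁ : ζ₁ = ((Real.sqrt P - Real.sqrt (P - 2)) / 2)^2)
    (hζ₂ : ζ₂ = ((Real.sqrt P + Real.sqrt (P - 2)) / 2)^2) :
    ∃ τ₁ τ₂ : ℝ, 0 < τ₁ ∧ τ₁ ≤ ζ₁ ∧ ζ₂ ≤ τ₂ ∧
      ∀ B : ℝ, 0 ≤ B →
        f₂ B ≥ ((f₂ τ₂ - f₂ τ₁) / (τ₂ - τ₁)) * (B - τ₁) + f₂ τ₁ := by
  set s₁ := (√P - √(P - 2)) / 2 with hs₁_def
  set s₂ := (√P + √(P - 2)) / 2 with hs₂_def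
  have hsum : s₁ + s₂ = √P := by ring
  have hprod : 2 * s₁ * s₂ = 1 := by
    rw [hs₁_def, hs₂_def]
    nlinarith [sq_sqrt (by linarith : (0 : ℝ) ≤ P), sq_sqrt (by linarith : (0 : ℝ) ≤ P - 2)]
  have hs₁ : 0 < s₁ := by
    have := sqrt_lt_sqrt (by linarith) (by linarith : P - 2 < P)
    linarith
  have hs : s₁ < s₂ := by linarith [sqrt_pos.2 (by linarith : (0 : ℝ) < P - 2)]
  have hs₂ : 0 < s₂ := hs₁.trans hs
  obtain rfl : f₂ = halfErfcSqrt √P := funext hf₂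
  subst hζ₁ hζ₂
  obtain ⟨c₁, hqc₁, hc₁⟩ := exists_tangent_halfErfcSqrt_le (a := √P) (sq_nonneg s₂)
    (by rw [sqrt_sq hs₂.le]; linarith)
  obtain ⟨b, hb, c, hc, hsupp⟩ := exists_supporting_chord (by gcongr) continuous_halfErfcSqrt
    (continuousOn_halfErfcSqrtDeriv.mono fun x hx => (pow_pos hs₂ 2).trans_le hx)
    (fun c hc => hasDerivAt_halfErfcSqrt ((pow_pos hs₂ 2).trans_le hc))
    (strictConcaveOn_halfErfcSqrt hs₁ hsum hprod)
    (strictConvexOn_halfErfcSqrt hs.le hsum hprod) hqc₁ hc₁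
    (exists_halfErfcSqrt_lt_add_mul (sqrt_pos.2 (by linarith)) (pow_pos hs₁ 2))
  refine ⟨b, c, hb.1, hb.2, hc, fun B hB => ?_⟩
  rw [← slope_def_field]
  linarith [hsupp B hB]
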